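/- Let K/L be a finite extension of H-graded fields with f_{K/L} = 1 (i.e., K₁ = L₁), and let R be a graded valuation ring of L. Then R admits a unique extension to a graded valuation ring A of K, characterized by: a homogeneous element a ∈ K lies in A if and only if a^e ∈ R, where e = [K:L]. Moreover if R ⊆ R' are graded valuation rings of L with unique extensions A, A' to K, then A ⊆ A'. -/

import Mathlib

open scoped DirectSum

/-- An `H`-graded field: a nonzero commutative ring with an internal grading by the
commutative group `H` in which every nonzero homogeneous element is invertible
(with homogeneous inverse). -/
structure GradedField (H : Type*) [CommGroup H] [DecidableEq H] (K : Type*) [CommRing K] where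
  comp : H → AddSubgroup K
  one_mem : (1 : K) ∈ comp 1
  mul_mem : ∀ {g h : H} {x y : K}, x ∈ comp g → y ∈ comp h → x * y ∈ comp (g * h)
  isInternal : DirectSum.IsInternal fun h : H => comp h
  zero_ne_one : (0 : K) ≠ 1
  inv_mem : ∀ {h : H} {x : K}, x ∈ comp h → x ≠ 0 → ∃ y ∈ comp h⁻¹, x * y = 1

namespace GradedField

variable {H : Type*} [CommGroup H] [DecidableEq H] {K : Type*} [CommRing K] (F : GradedField H K)

/-- A homogeneous element. -/
def Homogeneous (x : K) : Prop := ∃ h, x ∈ F.comp h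

/-- A subring is graded if each of its elements is a sum of homogeneous elements of the
subring. -/
def IsGradedSubring (R : Subring K) : Prop :=
  ∀ x ∈ R, x ∈ AddSubgroup.closure {y : K | y ∈ R ∧ F.Homogeneous y}

/-- A graded subfield: a graded subring closed under inverses of nonzero homogeneous
elements. -/
structure IsGradedSubfield (L : Subring K) : Prop where
  graded : F.IsGradedSubring L
  inv_mem : ∀ x ∈ L, F.Homogeneous x → x ≠ 0 → Ring.inverse x ∈ L

/-- A graded valuation ring of the graded subfield `L`: a graded subring `R ⊆ L` such that
every nonzero homogeneous element of `L` lies in `R` or has its inverse in `R`. -/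
def IsGradedValRing (L R : Subring K) : Prop :=
  R ≤ L ∧ F.IsGradedSubring R ∧
    ∀ x ∈ L, F.Homogeneous x → x ≠ 0 → (x ∈ R ∨ Ring.inverse x ∈ R)

/-- The identity component `K₁`, as a subring. -/
def oneComponent : Subring K where
  carrier := F.comp 1
  one_mem' := F.one_mem
  mul_mem' := fun ha hb => by simpa using F.mul_mem ha hb
  add_mem' := fun ha hb => (F.comp 1).add_mem ha hb
  zero_mem' := (F.comp 1).zero_mem
  neg_mem' := fun ha => (F.comp 1).neg_mem ha

theorem mem_oneComponent {x : K} : x ∈ F.oneComponent ↔ x ∈ F.comp 1 := Iff.rfl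

/-- The value group `ρ(L^×) ⊆ H` of a graded subfield `L`. -/
def valueGroup (L : Subring K)
    (hL : ∀ x ∈ L, F.Homogeneous x → x ≠ 0 → Ring.inverse x ∈ L) : Subgroup H where
  carrier := {h | ∃ x ∈ F.comp h, x ≠ 0 ∧ x ∈ L}
  one_mem' := ⟨1, F.one_mem, Ne.symm F.zero_ne_one, L.one_mem⟩
  mul_mem' := by
    rintro g h ⟨x, hx, hx0, hxL⟩ ⟨y, hy, hy0, hyL⟩
    obtain ⟨x', hx', hxx'⟩ := F.inv_mem hx hx0
    obtain ⟨y', hy', hyy'⟩ := F.inv_mem hy hy0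
    refine ⟨x * y, F.mul_mem hx hy, ?_, L.mul_mem hxL hyL⟩
    intro h0
    have h1 : x * y * (x' * y') = 1 := by rw [mul_mul_mul_comm, hxx', hyy', one_mul]
    rw [h0, zero_mul] at h1
    exact F.zero_ne_one h1
  inv_mem' := by
    rintro g ⟨x, hx, hx0, hxL⟩
    obtain ⟨y, hy, hxy⟩ := F.inv_mem hx hx0
    have hu : IsUnit x := IsUnit.of_mul_eq_one y hxy
    have hyx : Ring.inverse x = y := by
      calc Ring.inverse x = Ring.inverse x * (x * y) := by rw [hxy, mul_one]
        _ = Ring.inverse x * x * y := by ring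
        _ = y := by rw [Ring.inverse_mul_cancel x hu, one_mul]
    refine ⟨y, hy, ?_, ?_⟩
    · intro h0; rw [h0, mul_zero] at hxy; exact F.zero_ne_one hxy
    · rw [← hyx]; exact hL x hxL ⟨g, hx⟩ hx0

/-- The value group `ρ(K^×)` of the whole graded field. -/
def fullValueGroup : Subgroup H :=
  F.valueGroup ⊤ (fun _ _ _ _ => Subring.mem_top _)

/-- `K₁` as a module over `L₁ = K₁ ∩ L`. -/
def oneSubmodule (L : Subring K) : Submodule ↥(F.oneComponent ⊓ L) K where
  carrier := F.comp 1
  add_mem' := fun ha hb => (F.comp 1).add_mem ha hb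
  zero_mem' := (F.comp 1).zero_mem
  smul_mem' := fun c x hx => by
    have hc : (c : K) ∈ F.comp 1 := ((Subring.mem_inf).mp c.2).1
    have := F.mul_mem hc hx
    simpa [Subring.smul_def] using this

/-- A graded automorphism: a ring automorphism preserving each graded component. -/
def IsGradedAut (σ : RingAut K) : Prop := ∀ (h : H) (x : K), x ∈ F.comp h → σ x ∈ F.comp h

end GradedField

/-- The fixed subring `K^G` of a group of ring automorphisms. -/
def fixedSubring {K : Type*} [CommRing K] (G : Subgroup (RingAut K)) : Subring K where
  carrier := {x | ∀ σ ∈ G, σ x = x}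
  one_mem' := fun σ _ => map_one σ
  mul_mem' := fun ha hb σ hσ => by rw [map_mul, ha σ hσ, hb σ hσ]
  add_mem' := fun ha hb σ hσ => by rw [map_add, ha σ hσ, hb σ hσ]
  zero_mem' := fun σ _ => map_zero σ
  neg_mem' := fun ha σ hσ => by rw [map_neg, ha σ hσ]

theorem mem_fixedSubring {K : Type*} [CommRing K] {G : Subgroup (RingAut K)} {x : K} :
    x ∈ fixedSubring G ↔ ∀ σ ∈ G, σ x = x := Iff.rfl

namespace GradedField

variable {H : Type*} [CommGroup H] [DecidableEq H] {K : Type*} [CommRing K]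
variable (F : GradedField H K)

/-- Decomposition of an element into its homogeneous components. -/
noncomputable def decompose (x : K) : ⨁ h : H, ↥(F.comp h) :=
  (Equiv.ofBijective _ F.isInternal).symm x

/-- The degree-`h` homogeneous component of `x`. -/
noncomputable def component (h : H) (x : K) : K := (F.decompose x h : K)

/-- The inertia subgroup of `G`: graded automorphisms in `G` acting trivially on `K₁`. -/
def inertia (G : Subgroup (RingAut K)) : Subgroup (RingAut K) where
  carrier := {σ | σ ∈ G ∧ ∀ x ∈ F.comp 1, σ x = x}
  one_mem' := ⟨G.one_mem, fun _ _ => rfl⟩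
  mul_mem' := fun {a b} ha hb => ⟨G.mul_mem ha.1 hb.1, fun x hx => by
    show a (b x) = x
    rw [hb.2 x hx, ha.2 x hx]⟩
  inv_mem' := fun {a} ha => ⟨G.inv_mem ha.1, fun x hx => by
    conv_lhs => rw [← ha.2 x hx]
    exact a.symm_apply_apply x⟩

theorem mem_inertia {G : Subgroup (RingAut K)} {σ : RingAut K} :
    σ ∈ F.inertia G ↔ σ ∈ G ∧ ∀ x ∈ F.comp 1, σ x = x := Iff.rfl

end GradedField

/-- A subring `S` containing a subring `L`, viewed as an `L`-submodule of the ambient ring. -/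
def Subring.toSubmoduleOver {K : Type*} [CommRing K] (L S : Subring K) (hLS : L ≤ S) :
    Submodule ↥L K where
  carrier := S
  add_mem' := fun ha hb => S.add_mem ha hb
  zero_mem' := S.zero_mem
  smul_mem' := fun c x hx => S.mul_mem (hLS c.2) hx

section ZR

variable {H : Type*} [CommGroup H] [DecidableEq H] {K : Type*} [CommRing K]

/-- The Zariski–Riemann space of graded valuation rings of `K` containing `k₀`. -/
def GradedField.ZR (F : GradedField H K) (k₀ : Subring K) : Type _ :=
  {O : Subring K // F.IsGradedValRing ⊤ O ∧ k₀ ≤ O}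

/-- The set of homogeneous units (nonzero homogeneous elements) of `K`. -/
def GradedField.HomogUnits (F : GradedField H K) : Type _ :=
  {x : K // x ≠ 0 ∧ F.Homogeneous x}

open Classical in
/-- The embedding of the Zariski–Riemann space into `{0,1}^{K^×}` via characteristic
functions. -/
noncomputable def GradedField.chi (F : GradedField H K) (k₀ : Subring K) (O : F.ZR k₀) :
    F.HomogUnits → Bool :=
  fun x => decide (x.1 ∈ O.1)

/-- Basic open sets `P{F}∖{G}` of the constructible topology, for finite sets `F`, `G` of
homogeneous units. -/
def GradedField.constructibleBasis (F : GradedField H K) (k₀ : Subring K) :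
    Set (Set (F.ZR k₀)) :=
  {s | ∃ Fs Gs : Finset K, (∀ a ∈ Fs, a ≠ 0 ∧ F.Homogeneous a) ∧
    (∀ b ∈ Gs, b ≠ 0 ∧ F.Homogeneous b) ∧
    s = {O : F.ZR k₀ | (∀ a ∈ Fs, a ∈ O.1) ∧ ∀ b ∈ Gs, b ∉ O.1}}

/-- The constructible topology on the Zariski–Riemann space. -/
def GradedField.constructibleTop (F : GradedField H K) (k₀ : Subring K) :
    TopologicalSpace (F.ZR k₀) :=
  TopologicalSpace.generateFrom (F.constructibleBasis k₀)

/-!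
Since `K₁ ⊆ L`, nonzero homogeneous elements whose degrees represent the cosets of `ρ(L^×)` in
`ρ(K^×)` form an `L`-basis of `K`; hence this index is `e`, and the `e`-th power of every
homogeneous element of `K` lies in `L`. For any extension `A` of `R` a homogeneous `a` then lies
in `A` exactly when `a ^ e ∈ R` (`a ^ e ∈ A ∩ L` one way, `A` being a graded valuation ring the
other), which gives uniqueness and monotonicity. For existence, take the subring generated by the
homogeneous `a` with `a ^ e ∈ R`: by the binomial formula these form an additive group in each
degree, so the `e`-th powers of all homogeneous components of its elements lie in `R`.
-/

universe u v

namespace GradedField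

variable {H : Type u} [CommGroup H] [DecidableEq H] {K : Type v} [CommRing K]
  {F : GradedField H K} {L R : Subring K} {e : ℕ}

theorem nontrivial (F : GradedField H K) : Nontrivial K := ⟨⟨0, 1, F.zero_ne_one⟩⟩

theorem isUnit_of_mem_comp {h : H} {x : K} (hx : x ∈ F.comp h) (hx0 : x ≠ 0) : IsUnit x :=
  let ⟨y, _, hxy⟩ := F.inv_mem hx hx0
  IsUnit.of_mul_eq_one y hxy

theorem inverse_mem_comp {h : H} {x : K} (hx : x ∈ F.comp h) (hx0 : x ≠ 0) :
    Ring.inverse x ∈ F.comp h⁻¹ := by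
  obtain ⟨y, hy, hxy⟩ := F.inv_mem hx hx0
  have hinv : Ring.inverse x * 1 = y :=
    (Ring.inverse_mul_eq_iff_eq_mul x 1 y (IsUnit.of_mul_eq_one y hxy)).mpr hxy.symm
  rw [mul_one] at hinv
  exact hinv ▸ hy

theorem mul_ne_zero_of_mem_comp {g h : H} {x y : K} (hx : x ∈ F.comp g) (hy : y ∈ F.comp h)
    (hx0 : x ≠ 0) (hy0 : y ≠ 0) : x * y ≠ 0 :=
  haveI := F.nontrivial
  ((isUnit_of_mem_comp hx hx0).mul (isUnit_of_mem_comp hy hy0)).ne_zero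

theorem pow_mem_comp {h : H} {x : K} (hx : x ∈ F.comp h) (n : ℕ) : x ^ n ∈ F.comp (h ^ n) := by
  induction n with
  | zero => simpa using F.one_mem
  | succ n ih => rw [pow_succ, pow_succ]; exact F.mul_mem ih hx

variable (F) in
noncomputable def componentHom (δ : H) : K →+ K :=
  (F.comp δ).subtype.comp <| (DFinsupp.evalAddMonoidHom δ).comp
    (AddEquiv.ofBijective _ F.isInternal).symm.toAddMonoidHom

theorem component_zero (δ : H) : F.component δ 0 = 0 := map_zero (F.componentHom δ)

theorem component_add (δ : H) (a b : K) :
    F.component δ (a + b) = F.component δ a + F.component δ b :=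
  map_add (F.componentHom δ) a b

theorem component_neg (δ : H) (a : K) : F.component δ (-a) = -F.component δ a :=
  map_neg (F.componentHom δ) a

theorem component_sum {ι : Type*} (δ : H) (s : Finset ι) (f : ι → K) :
    F.component δ (∑ i ∈ s, f i) = ∑ i ∈ s, F.component δ (f i) :=
  map_sum (F.componentHom δ) f s

theorem component_mem (δ : H) (x : K) : F.component δ x ∈ F.comp δ := (F.decompose x δ).2

theorem component_of_mem {h : H} {x : K} (hx : x ∈ F.comp h) (δ : H) :
    F.component δ x = if h = δ then x else 0 := by
  have hdec : F.decompose x = DirectSum.of (fun h => F.comp h) h ⟨x, hx⟩ :=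
    (Equiv.ofBijective _ F.isInternal).symm_apply_eq.mpr
      (DirectSum.coeAddMonoidHom_of (fun h => F.comp h) h ⟨x, hx⟩).symm
  unfold component
  rw [hdec]
  split_ifs with hδ
  · subst hδ; rw [DirectSum.of_eq_same]
  · rw [DirectSum.of_eq_of_ne _ _ _ (Ne.symm hδ)]; rfl

theorem sum_component (x : K) [∀ (h : H) (y : F.comp h), Decidable (y ≠ 0)] :
    ∑ h ∈ (F.decompose x).support, F.component h x = x := by
  have hx : DirectSum.coeAddMonoidHom F.comp (F.decompose x) = x :=
    (Equiv.ofBijective _ F.isInternal).apply_symm_apply x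
  conv_rhs => rw [← hx, ← DirectSum.sum_support_of (F.decompose x)]
  rw [map_sum]
  simp only [DirectSum.coeAddMonoidHom_of]
  rfl

theorem eq_zero_of_forall_component_eq_zero {x : K} (hx : ∀ δ, F.component δ x = 0) :
    x = 0 := by
  classical
  rw [← F.sum_component x]
  exact Finset.sum_eq_zero fun δ _ => hx δ

theorem induction_on_homogeneous {p : K → Prop} (x : K) (zero : p 0)
    (mem : ∀ h, ∀ y ∈ F.comp h, p y) (add : ∀ a b, p a → p b → p (a + b)) : p x := by
  obtain ⟨d, rfl⟩ := F.isInternal.surjective x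
  induction d using DirectSum.induction_on with
  | zero => simpa using zero
  | of h y => simpa using mem h y y.2
  | add a b ha hb => rw [map_add]; exact add _ _ ha hb

theorem component_mul_of_mem {h : H} {b : K} (hb : b ∈ F.comp h) (c : K) (δ : H) :
    F.component δ (c * b) = F.component (δ * h⁻¹) c * b := by
  induction c using F.induction_on_homogeneous with
  | zero => simp only [zero_mul, component_zero]
  | mem g c hc =>
    simp only [component_of_mem (F.mul_mem hc hb), component_of_mem hc, ite_mul, zero_mul,
      eq_mul_inv_iff_mul_eq]
  | add c c' hc hc' => rw [add_mul, component_add, component_add, hc, hc', add_mul]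

theorem IsGradedSubring.component_mem (hR : F.IsGradedSubring R) {x : K} (hx : x ∈ R)
    (δ : H) : F.component δ x ∈ R := by
  refine AddSubgroup.closure_induction (p := fun y _ => F.component δ y ∈ R) ?_ ?_ ?_ ?_
    (hR x hx)
  · rintro y ⟨hyR, h, hyh⟩
    rw [component_of_mem hyh]
    split_ifs
    exacts [hyR, R.zero_mem]
  · rw [component_zero]
    exact R.zero_mem
  · intro a b _ _ ha hb
    rw [component_add]
    exact R.add_mem ha hb
  · intro a _ ha
    rw [component_neg]
    exact R.neg_mem ha

theorem IsGradedSubring.le_of_forall_mem_comp {A B : Subring K} (hA : F.IsGradedSubring A)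
    (hAB : ∀ (h : H) (x : K), x ∈ F.comp h → x ∈ A → x ∈ B) : A ≤ B := by
  intro x hx
  refine (AddSubgroup.closure_le B.toAddSubgroup).mpr ?_ (hA x hx)
  rintro y ⟨hyA, h, hy⟩
  exact hAB h y hy hyA

theorem mem_of_mem_comp_of_mem_valueGroup
    (hLi : ∀ x ∈ L, F.Homogeneous x → x ≠ 0 → Ring.inverse x ∈ L) (hf : F.oneComponent ≤ L)
    {g : H} {x : K} (hx : x ∈ F.comp g) (hg : g ∈ F.valueGroup L hLi) : x ∈ L := by
  obtain ⟨z, hz, hz0, hzL⟩ := hg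
  have hxz : x * Ring.inverse z ∈ F.comp 1 := by
    simpa using F.mul_mem hx (inverse_mem_comp hz hz0)
  rw [← Ring.inverse_mul_cancel_right z x (isUnit_of_mem_comp hz hz0)]
  exact L.mul_mem (hf hxz) hzL

theorem mem_valueGroup_of_component_ne_zero (hL : F.IsGradedSubfield L) {x : K} (hx : x ∈ L)
    {δ : H} (hδ : F.component δ x ≠ 0) : δ ∈ F.valueGroup L hL.inv_mem :=
  ⟨_, component_mem δ x, hδ, hL.graded.component_mem hx δ⟩

theorem IsGradedValRing.mem_of_pow_mem (hR : F.IsGradedValRing L R) {g : H} {x : K}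
    (hx : x ∈ F.comp g) (hxL : x ∈ L) {n : ℕ} (hn : 0 < n) (hxn : x ^ n ∈ R) : x ∈ R := by
  rcases eq_or_ne x 0 with rfl | hx0
  · exact R.zero_mem
  obtain ⟨m, rfl⟩ := Nat.exists_eq_succ_of_ne_zero hn.ne'
  rcases hR.2.2 x hxL ⟨g, hx⟩ hx0 with hxR | hinvR
  · exact hxR
  · have hxu : x = x ^ (m + 1) * Ring.inverse x ^ m := by
      rw [pow_succ', mul_assoc, ← mul_pow, Ring.mul_inverse_cancel x
        (isUnit_of_mem_comp hx hx0), one_pow, mul_one]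
    rw [hxu]
    exact R.mul_mem hxn (R.pow_mem hinvR m)

theorem IsGradedValRing.add_pow_mem (hR : F.IsGradedValRing L R) {n : ℕ} (hn : 0 < n) {h : H}
    (hhn : ∀ y ∈ F.comp (h ^ n), y ∈ L) {a b : K} (ha : a ∈ F.comp h) (hb : b ∈ F.comp h)
    (han : a ^ n ∈ R) (hbn : b ^ n ∈ R) : (a + b) ^ n ∈ R := by
  rw [add_pow]
  refine R.sum_mem fun i hi => R.mul_mem ?_ (natCast_mem R _)
  have hin : i ≤ n := Finset.mem_range_succ_iff.mp hi
  have hdeg : a ^ i * b ^ (n - i) ∈ F.comp (h ^ n) := by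
    simpa [← pow_add, Nat.add_sub_cancel' hin] using
      F.mul_mem (pow_mem_comp ha i) (pow_mem_comp hb (n - i))
  refine hR.mem_of_pow_mem hdeg (hhn _ hdeg) hn ?_
  rw [mul_pow, ← pow_mul, ← pow_mul, mul_comm i, mul_comm (n - i), pow_mul, pow_mul]
  exact R.mul_mem (R.pow_mem han i) (R.pow_mem hbn (n - i))

theorem linearIndependent_of_degrees_distinct_mod (hL : F.IsGradedSubfield L) {ι : Type*}
    (b : ι → K) (d : ι → H) (hb : ∀ i, b i ∈ F.comp (d i)) (hb0 : ∀ i, b i ≠ 0)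
    (hd : ∀ i j, d i * (d j)⁻¹ ∈ F.valueGroup L hL.inv_mem → i = j) :
    LinearIndependent L b := by
  classical
  rw [linearIndependent_iff']
  intro s c hsum i₀ hi₀
  refine Subtype.ext (eq_zero_of_forall_component_eq_zero (F := F) fun g => ?_)
  by_contra hg
  have hgL := mem_valueGroup_of_component_ne_zero hL (c i₀).2 hg
  -- Only the `i₀`-th term of the relation contributes to the degree `g * d i₀`.
  have hother : ∀ i ∈ s, i ≠ i₀ → F.component (g * d i₀) ((c i : K) * b i) = 0 := by
    intro i _ hi
    rw [component_mul_of_mem (hb i)]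
    by_contra hne
    have hiL := mem_valueGroup_of_component_ne_zero hL (c i).2 (left_ne_zero_of_mul hne)
    refine hi (hd i₀ i ?_).symm
    simpa [mul_assoc] using
      (F.valueGroup L hL.inv_mem).mul_mem ((F.valueGroup L hL.inv_mem).inv_mem hgL) hiL
  have hcomp := congrArg (F.component (g * d i₀)) hsum
  simp only [component_sum, component_zero, Subring.smul_def, smul_eq_mul] at hcomp
  rw [Finset.sum_eq_single_of_mem i₀ hi₀ hother, component_mul_of_mem (hb i₀),
    mul_inv_cancel_right] at hcomp
  exact mul_ne_zero_of_mem_comp (component_mem g _) (hb i₀) hg (hb0 i₀) hcomp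

theorem span_eq_top_of_degrees_cover
    (hLi : ∀ x ∈ L, F.Homogeneous x → x ≠ 0 → Ring.inverse x ∈ L) (hf : F.oneComponent ≤ L)
    {ι : Type*} (b : ι → K) (d : ι → H) (hb : ∀ i, b i ∈ F.comp (d i)) (hb0 : ∀ i, b i ≠ 0)
    (hd : ∀ h ∈ F.fullValueGroup, ∃ i, h * (d i)⁻¹ ∈ F.valueGroup L hLi) :
    Submodule.span L (Set.range b) = ⊤ := by
  refine Submodule.eq_top_iff'.mpr fun x => ?_
  induction x using F.induction_on_homogeneous with
  | zero => exact Submodule.zero_mem _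
  | add x y hx hy => exact Submodule.add_mem _ hx hy
  | mem h y hy =>
    rcases eq_or_ne y 0 with rfl | hy0
    · exact Submodule.zero_mem _
    obtain ⟨i, hi⟩ := hd h ⟨y, hy, hy0, Subring.mem_top y⟩
    have hcoeff : y * Ring.inverse (b i) ∈ L :=
      mem_of_mem_comp_of_mem_valueGroup hLi hf (F.mul_mem hy (inverse_mem_comp (hb i) (hb0 i)))
        hi
    have hy' : y = (⟨_, hcoeff⟩ : L) • b i :=
      (Ring.inverse_mul_cancel_right _ _ (isUnit_of_mem_comp (hb i) (hb0 i))).symm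
    rw [hy']
    exact Submodule.smul_mem _ _ (Submodule.subset_span ⟨i, rfl⟩)

theorem nonempty_basis_valueGroup_quotient (hL : F.IsGradedSubfield L)
    (hf : F.oneComponent ≤ L) :
    Nonempty (Module.Basis
      (F.fullValueGroup ⧸ (F.valueGroup L hL.inv_mem).subgroupOf F.fullValueGroup) L K) := by
  have hpick : ∀ q : F.fullValueGroup ⧸ (F.valueGroup L hL.inv_mem).subgroupOf F.fullValueGroup,
      ∃ x ∈ F.comp (q.out : H), x ≠ 0 := fun q =>
    let ⟨x, hx, hx0, _⟩ := q.out.2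
    ⟨x, hx, hx0⟩
  choose b hb hb0 using hpick
  refine ⟨Module.Basis.mk (linearIndependent_of_degrees_distinct_mod hL b _ hb hb0 ?_)
    (span_eq_top_of_degrees_cover hL.inv_mem hf b _ hb hb0 ?_).ge⟩
  · intro q q' hqq'
    rw [← q.out_eq', ← q'.out_eq', QuotientGroup.eq, Subgroup.mem_subgroupOf]
    simpa [mul_comm] using (F.valueGroup L hL.inv_mem).inv_mem hqq'
  · intro h hh
    refine ⟨(⟨h, hh⟩ : F.fullValueGroup), ?_⟩
    have := QuotientGroup.eq.mp (QuotientGroup.out_eq' ((⟨h, hh⟩ : F.fullValueGroup) :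
      F.fullValueGroup ⧸ (F.valueGroup L hL.inv_mem).subgroupOf F.fullValueGroup))
    simpa [mul_comm, Subgroup.mem_subgroupOf] using this

theorem relIndex_valueGroup (hL : F.IsGradedSubfield L) (hf : F.oneComponent ≤ L)
    (hrank : Module.rank L K = e) :
    (F.valueGroup L hL.inv_mem).relIndex F.fullValueGroup = e := by
  have := F.nontrivial
  obtain ⟨B⟩ := nonempty_basis_valueGroup_quotient hL hf
  have hcard := B.mk_eq_rank
  rw [hrank, Cardinal.lift_natCast, Cardinal.lift_eq_nat_iff] at hcard
  rw [Subgroup.relIndex, Subgroup.index, Nat.card, hcard, Cardinal.toNat_natCast]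

theorem pow_mem_valueGroup (hL : F.IsGradedSubfield L) (hf : F.oneComponent ≤ L)
    (hrank : Module.rank L K = e) {g : H} (hg : g ∈ F.fullValueGroup) :
    g ^ e ∈ F.valueGroup L hL.inv_mem :=
  relIndex_valueGroup hL hf hrank ▸ Subgroup.pow_relIndex_mem _ hg

theorem pow_mem_of_mem_comp (hL : F.IsGradedSubfield L) (hf : F.oneComponent ≤ L)
    (hrank : Module.rank L K = e) {h : H} {x : K} (hx : x ∈ F.comp h) : x ^ e ∈ L := by
  rcases eq_or_ne x 0 with rfl | hx0
  · exact L.pow_mem L.zero_mem e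
  exact mem_of_mem_comp_of_mem_valueGroup hL.inv_mem hf (pow_mem_comp hx e)
    (pow_mem_valueGroup hL hf hrank ⟨x, hx, hx0, Subring.mem_top x⟩)

theorem mem_iff_pow_mem_of_extension (hL : F.IsGradedSubfield L) (hf : F.oneComponent ≤ L)
    (he : 0 < e) (hrank : Module.rank L K = e) {A : Subring K} (hA : F.IsGradedValRing ⊤ A)
    (hAL : A ⊓ L = R) {h : H} {a : K} (ha : a ∈ F.comp h) : a ∈ A ↔ a ^ e ∈ R := by
  subst hAL
  exact ⟨fun haA => ⟨A.pow_mem haA e, pow_mem_of_mem_comp hL hf hrank ha⟩,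
    fun hae => hA.mem_of_pow_mem ha (Subring.mem_top a) he (Subring.mem_inf.mp hae).1⟩

theorem extension_mono (hL : F.IsGradedSubfield L) (hf : F.oneComponent ≤ L) (he : 0 < e)
    (hrank : Module.rank L K = e) {R' A A' : Subring K} (hA : F.IsGradedValRing ⊤ A)
    (hAL : A ⊓ L = R) (hA' : F.IsGradedValRing ⊤ A') (hA'L : A' ⊓ L = R') (hRR' : R ≤ R') :
    A ≤ A' :=
  hA.2.1.le_of_forall_mem_comp fun _ _ hx hxA =>
    (mem_iff_pow_mem_of_extension hL hf he hrank hA' hA'L hx).mpr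
      (hRR' ((mem_iff_pow_mem_of_extension hL hf he hrank hA hAL hx).mp hxA))

variable (F) in
def homogeneousRoots (R : Subring K) (e : ℕ) : Submonoid K where
  carrier := {a | F.Homogeneous a ∧ a ^ e ∈ R}
  one_mem' := ⟨⟨1, F.one_mem⟩, by rw [one_pow]; exact R.one_mem⟩
  mul_mem' := fun ⟨⟨g, ha⟩, hae⟩ ⟨⟨h, hb⟩, hbe⟩ =>
    ⟨⟨g * h, F.mul_mem ha hb⟩, by rw [mul_pow]; exact R.mul_mem hae hbe⟩

variable (F) in
def rootClosure (R : Subring K) (e : ℕ) : Subring K :=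
  Subring.closure (F.homogeneousRoots R e)

theorem mem_rootClosure_iff {x : K} :
    x ∈ F.rootClosure R e ↔ x ∈ AddSubgroup.closure (F.homogeneousRoots R e : Set K) := by
  rw [rootClosure, Subring.mem_closure_iff, Submonoid.closure_eq]

theorem mem_rootClosure_of_mem_comp {h : H} {x : K} (hx : x ∈ F.comp h) (hxe : x ^ e ∈ R) :
    x ∈ F.rootClosure R e :=
  Subring.subset_closure ⟨⟨h, hx⟩, hxe⟩

theorem isGradedSubring_rootClosure : F.IsGradedSubring (F.rootClosure R e) := by
  intro x hx
  refine AddSubgroup.closure_mono ?_ (mem_rootClosure_iff.mp hx)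
  exact fun y hy => ⟨Subring.subset_closure hy, hy.1⟩

theorem pow_component_mem_of_mem_rootClosure (hL : F.IsGradedSubfield L)
    (hf : F.oneComponent ≤ L) (he : 0 < e) (hrank : Module.rank L K = e)
    (hR : F.IsGradedValRing L R) {x : K} (hx : x ∈ F.rootClosure R e) (δ : H) :
    F.component δ x ^ e ∈ R := by
  refine AddSubgroup.closure_induction (p := fun y _ => F.component δ y ^ e ∈ R) ?_ ?_ ?_ ?_
    (mem_rootClosure_iff.mp hx)
  · rintro y ⟨⟨h, hy⟩, hye⟩
    rw [component_of_mem hy]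
    split_ifs
    · exact hye
    · rw [zero_pow he.ne']; exact R.zero_mem
  · rw [component_zero, zero_pow he.ne']
    exact R.zero_mem
  · intro a b _ _ ha hb
    rw [component_add]
    rcases eq_or_ne (F.component δ a) 0 with ha0 | ha0
    · rwa [ha0, zero_add]
    have hδe := pow_mem_valueGroup hL hf hrank ⟨_, component_mem δ a, ha0, Subring.mem_top _⟩
    exact hR.add_pow_mem he (fun y hy => mem_of_mem_comp_of_mem_valueGroup hL.inv_mem hf hy hδe)
      (component_mem δ a) (component_mem δ b) ha hb
  · intro a _ ha
    rw [component_neg, neg_pow]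
    exact R.mul_mem (R.pow_mem (R.neg_mem R.one_mem) e) ha

theorem isGradedValRing_rootClosure (hL : F.IsGradedSubfield L) (hf : F.oneComponent ≤ L)
    (hrank : Module.rank L K = e) (hR : F.IsGradedValRing L R) :
    F.IsGradedValRing ⊤ (F.rootClosure R e) := by
  refine ⟨le_top, isGradedSubring_rootClosure, ?_⟩
  rintro x - ⟨h, hx⟩ hx0
  have := F.nontrivial
  have hxe0 : x ^ e ≠ 0 := ((isUnit_of_mem_comp hx hx0).pow e).ne_zero
  rcases hR.2.2 (x ^ e) (pow_mem_of_mem_comp hL hf hrank hx) ⟨h ^ e, pow_mem_comp hx e⟩ hxe0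
    with hxe | hxe
  · exact Or.inl (mem_rootClosure_of_mem_comp hx hxe)
  · rw [← Ring.inverse_pow] at hxe
    exact Or.inr (mem_rootClosure_of_mem_comp (inverse_mem_comp hx hx0) hxe)

theorem rootClosure_inf_eq (hL : F.IsGradedSubfield L) (hf : F.oneComponent ≤ L) (he : 0 < e)
    (hrank : Module.rank L K = e) (hR : F.IsGradedValRing L R) :
    F.rootClosure R e ⊓ L = R := by
  classical
  refine le_antisymm (fun x hx => ?_) (le_inf ?_ hR.1)
  · obtain ⟨hxA, hxL⟩ := Subring.mem_inf.mp hx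
    rw [← F.sum_component x]
    exact R.sum_mem fun δ _ => hR.mem_of_pow_mem (component_mem δ x)
      (hL.graded.component_mem hxL δ) he
      (pow_component_mem_of_mem_rootClosure hL hf he hrank hR hxA δ)
  · exact hR.2.1.le_of_forall_mem_comp fun _ _ hx hxR =>
      mem_rootClosure_of_mem_comp hx (R.pow_mem hxR e)

end GradedField

/-- Let `K/L` be a finite extension of `H`-graded fields with `f_{K/L} = 1` (i.e. `K₁ = L₁`,
expressed as `K₁ ≤ L`), of degree `e = [K:L]`, and let `R` be a graded valuation ring of `L`.
Then `R` admits a unique extension `A` to a graded valuation ring of `K`, characterized by: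
a homogeneous `a ∈ K` lies in `A` iff `a ^ e ∈ R`.  Moreover extensions are monotone: if
`R ⊆ R'` are graded valuation rings of `L` with extensions `A`, `A'`, then `A ⊆ A'`. -/
theorem GradedField.unique_extension_totally_ramified {H : Type*} [CommGroup H]
    [DecidableEq H] {K : Type*} [CommRing K] (F : GradedField H K) (L : Subring K)
    (hL : F.IsGradedSubfield L) (hf : F.oneComponent ≤ L) (e : ℕ) (he : 0 < e)
    (hrank : Module.rank ↥L K = e) (R : Subring K) (hR : F.IsGradedValRing L R) :
    (∃ A : Subring K, (F.IsGradedValRing ⊤ A ∧ A ⊓ L = R) ∧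
      (∀ (h : H) (a : K), a ∈ F.comp h → (a ∈ A ↔ a ^ e ∈ R)) ∧
      ∀ A' : Subring K, F.IsGradedValRing ⊤ A' ∧ A' ⊓ L = R → A' = A) ∧
    ∀ R' : Subring K, F.IsGradedValRing L R' → R ≤ R' →
      ∀ A A' : Subring K, F.IsGradedValRing ⊤ A ∧ A ⊓ L = R →
        F.IsGradedValRing ⊤ A' ∧ A' ⊓ L = R' → A ≤ A' := by
  have hA : F.IsGradedValRing ⊤ (F.rootClosure R e) :=
    isGradedValRing_rootClosure hL hf hrank hR
  have hAL : F.rootClosure R e ⊓ L = R := rootClosure_inf_eq hL hf he hrank hR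
  refine ⟨⟨F.rootClosure R e, ⟨hA, hAL⟩,
    fun _ _ ha => mem_iff_pow_mem_of_extension hL hf he hrank hA hAL ha,
    fun A' hA' => le_antisymm (extension_mono hL hf he hrank hA'.1 hA'.2 hA hAL le_rfl)
      (extension_mono hL hf he hrank hA hAL hA'.1 hA'.2 le_rfl)⟩,
    fun _ _ hRR' _ _ hA hA' => extension_mono hL hf he hrank hA.1 hA.2 hA'.1 hA'.2 hRR'⟩
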